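/- arXiv:1407.7398 — 3 statements merged into one kernel-verified Lean document; each statement's English description precedes it below -/
import Mathlib

section
/- Fix an integer n ≥ 1. Let m, b_1, …, b_n : ℝ² → ℝ be smooth functions of (x, t) satisfying the n-th CH equation: (1/2)(b_{1,xxx} − b_{1,x}) = −(1/2) m_x; (1/2)(b_{j,xxx} − b_{j,x}) = (m b_{j−1})_x + m b_{j−1,x} for every 2 ≤ j ≤ n; and m_t = (m b_n)_x + m b_{n,x}. Then for every real λ ≠ 0 the zero-curvature equation U_t − V_x + U V − V U = 0 holds pointwise on ℝ², where V = −(1/2) U + Σ_{j=1}^{n} λ^{j−n} Ṽ[b_j]. -/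
open Matrix Finset

/-- Partial derivative in the first (x) variable. -/
noncomputable def dX (f : ℝ → ℝ → ℝ) : ℝ → ℝ → ℝ := fun x t => deriv (fun x' => f x' t) x

/-- Partial derivative in the second (t) variable. -/
noncomputable def dT (f : ℝ → ℝ → ℝ) : ℝ → ℝ → ℝ := fun x t => deriv (fun t' => f x t') t

/-- Smoothness of a function of two real variables. -/
def Smooth2 (f : ℝ → ℝ → ℝ) : Prop := ContDiff ℝ (⊤ : ℕ∞) (fun p : ℝ × ℝ => f p.1 p.2)

/-- Entrywise partial derivative in x of a matrix-valued function. -/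
noncomputable def mdX (M : ℝ → ℝ → Matrix (Fin 2) (Fin 2) ℝ) :
    ℝ → ℝ → Matrix (Fin 2) (Fin 2) ℝ :=
  fun x t => Matrix.of fun i j => deriv (fun x' => M x' t i j) x

/-- Entrywise partial derivative in t of a matrix-valued function. -/
noncomputable def mdT (M : ℝ → ℝ → Matrix (Fin 2) (Fin 2) ℝ) :
    ℝ → ℝ → Matrix (Fin 2) (Fin 2) ℝ :=
  fun x t => Matrix.of fun i j => deriv (fun t' => M x t' i j) t

/-- The CH spatial Lax matrix U(λ) = [[0, 1], [1/4 + λ m, 0]]. -/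
noncomputable def CHU (lam : ℝ) (m : ℝ → ℝ → ℝ) : ℝ → ℝ → Matrix (Fin 2) (Fin 2) ℝ :=
  fun x t => !![0, 1; 1/4 + lam * m x t, 0]

/-- The matrix Ṽ[b](λ) of the CH hierarchy. -/
noncomputable def CHVt (lam : ℝ) (m b : ℝ → ℝ → ℝ) : ℝ → ℝ → Matrix (Fin 2) (Fin 2) ℝ :=
  fun x t =>
    !![-(1/2) * dX b x t, b x t + 1/2 - 1/(2*lam);
       lam * m x t * (b x t + 1/2) - (1/2) * dX (dX b) x t + (1/4) * (b x t + 1/2)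
         - (1/2) * m x t - 1/(8*lam),
       (1/2) * dX b x t]

lemma diffAt_of_smooth {g : ℝ → ℝ} (hg : ContDiff ℝ (⊤:ℕ∞) g) (x : ℝ) : DifferentiableAt ℝ g x :=
  (hg.differentiable (by simp)).differentiableAt

lemma deriv_smooth {g : ℝ → ℝ} (hg : ContDiff ℝ (⊤:ℕ∞) g) : ContDiff ℝ (⊤:ℕ∞) (deriv g) :=
  (contDiff_infty_iff_deriv.mp hg).2

lemma sect_smooth {f : ℝ → ℝ → ℝ} (hf : Smooth2 f) (t : ℝ) :
    ContDiff ℝ (⊤:ℕ∞) (fun y : ℝ => f y t) :=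
  (hf.comp (contDiff_id.prodMk contDiff_const)).of_le (by simp)

lemma sect_smooth_t {f : ℝ → ℝ → ℝ} (hf : Smooth2 f) (x : ℝ) :
    ContDiff ℝ (⊤:ℕ∞) (fun s : ℝ => f x s) :=
  (hf.comp (contDiff_const.prodMk contDiff_id)).of_le (by simp)

lemma tele2 (F : ℕ → ℝ) (k : ℕ) :
    ∑ j ∈ Finset.Icc 1 k, (F j - F (j-1)) = F k - F 0 := by
  induction k with
  | zero => simp
  | succ p ih =>
    rw [Finset.sum_Icc_succ_top (Nat.le_add_left 1 p), ih]
    simp only [Nat.add_sub_cancel]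
    ring

/-- auxiliary sequence used in the telescoping argument -/
noncomputable def Faux (lam M1 M : ℝ) (n : ℕ) (B B1 : ℕ → ℝ) : ℕ → ℝ :=
  fun j => if j = 0 then 0 else lam ^ ((j:ℤ) + 1 - (n:ℤ)) * (M1 * B j + 2 * (M * B1 j) + M1 / 2)

lemma Faux_zero (lam M1 M : ℝ) (n : ℕ) (B B1 : ℕ → ℝ) : Faux lam M1 M n B B1 0 = 0 := by
  simp [Faux]

lemma Faux_pos (lam M1 M : ℝ) (n : ℕ) (B B1 : ℕ → ℝ) {j : ℕ} (hj : j ≠ 0) :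
    Faux lam M1 M n B B1 j
      = lam ^ ((j:ℤ) + 1 - (n:ℤ)) * (M1 * B j + 2 * (M * B1 j) + M1 / 2) := by
  simp [Faux, hj]

theorem nth_CH_zero_curvature
    (n : ℕ) (hn : 1 ≤ n) (m : ℝ → ℝ → ℝ) (b : ℕ → ℝ → ℝ → ℝ)
    (hm : Smooth2 m) (hb : ∀ j, 1 ≤ j → j ≤ n → Smooth2 (b j))
    (h1 : ∀ x t, (1/2) * (dX (dX (dX (b 1))) x t - dX (b 1) x t) = -(1/2) * dX m x t)
    (hrec : ∀ j, 2 ≤ j → j ≤ n → ∀ x t,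
      (1/2) * (dX (dX (dX (b j))) x t - dX (b j) x t)
        = dX (fun x t => m x t * b (j-1) x t) x t + m x t * dX (b (j-1)) x t)
    (hev : ∀ x t, dT m x t
        = dX (fun x t => m x t * b n x t) x t + m x t * dX (b n) x t)
    (lam : ℝ) (hlam : lam ≠ 0) :
    ∀ x t,
      mdT (CHU lam m) x t
        - mdX (fun x t => (-(1/2) : ℝ) • CHU lam m x t
            + ∑ j ∈ Finset.Icc 1 n, lam ^ ((j : ℤ) - (n : ℤ)) • CHVt lam m (b j) x t) x t
        + CHU lam m x t *
            ((-(1/2) : ℝ) • CHU lam m x t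
              + ∑ j ∈ Finset.Icc 1 n, lam ^ ((j : ℤ) - (n : ℤ)) • CHVt lam m (b j) x t)
        - ((-(1/2) : ℝ) • CHU lam m x t
              + ∑ j ∈ Finset.Icc 1 n, lam ^ ((j : ℤ) - (n : ℤ)) • CHVt lam m (b j) x t) *
            CHU lam m x t
      = 0 := by
  intro x t
  -- smoothness facts
  have hμs : ContDiff ℝ (⊤:ℕ∞) (fun y : ℝ => m y t) := sect_smooth hm t
  have hμ' : HasDerivAt (fun y : ℝ => m y t) (dX m x t) x :=
    (diffAt_of_smooth hμs x).hasDerivAt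
  have hmt' : HasDerivAt (fun s : ℝ => m x s) (dT m x t) t :=
    (diffAt_of_smooth (sect_smooth_t hm x) t).hasDerivAt
  have hβ : ∀ j ∈ Finset.Icc 1 n, ContDiff ℝ (⊤:ℕ∞) (fun y : ℝ => b j y t) := fun j hj =>
    sect_smooth (hb j (Finset.mem_Icc.mp hj).1 (Finset.mem_Icc.mp hj).2) t
  have hB' : ∀ j ∈ Finset.Icc 1 n, HasDerivAt (fun y : ℝ => b j y t) (dX (b j) x t) x :=
    fun j hj => (diffAt_of_smooth (hβ j hj) x).hasDerivAt
  have hB1' : ∀ j ∈ Finset.Icc 1 n,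
      HasDerivAt (fun x' : ℝ => dX (b j) x' t) (dX (dX (b j)) x t) x :=
    fun j hj => (diffAt_of_smooth (deriv_smooth (hβ j hj)) x).hasDerivAt
  have hB2' : ∀ j ∈ Finset.Icc 1 n,
      HasDerivAt (fun x' : ℝ => dX (dX (b j)) x' t) (dX (dX (dX (b j))) x t) x :=
    fun j hj => (diffAt_of_smooth (deriv_smooth (deriv_smooth (hβ j hj))) x).hasDerivAt
  have hprod : ∀ j ∈ Finset.Icc 1 n,
      dX (fun x t => m x t * b j x t) x t = dX m x t * b j x t + m x t * dX (b j) x t :=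
    fun j hj => (hμ'.mul (hB' j hj)).deriv
  -- derivative computations for the four entries of mdX
  have d00 : deriv (fun x' => -(1/2 : ℝ) * 0
        + ∑ j ∈ Finset.Icc 1 n, lam ^ ((j:ℤ) - (n:ℤ)) * (-(1/2) * dX (b j) x' t)) x
      = ∑ j ∈ Finset.Icc 1 n, lam ^ ((j:ℤ) - (n:ℤ)) * (-(1/2) * dX (dX (b j)) x t) := by
    refine HasDerivAt.deriv ?_
    exact HasDerivAt.const_add _
      (HasDerivAt.fun_sum fun j hj => (((hB1' j hj).const_mul _).const_mul _))
  have d01 : deriv (fun x' => -(1/2 : ℝ) * 1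
        + ∑ j ∈ Finset.Icc 1 n, lam ^ ((j:ℤ) - (n:ℤ)) * (b j x' t + 1/2 - 1/(2*lam))) x
      = ∑ j ∈ Finset.Icc 1 n, lam ^ ((j:ℤ) - (n:ℤ)) * dX (b j) x t := by
    refine HasDerivAt.deriv ?_
    exact HasDerivAt.const_add _
      (HasDerivAt.fun_sum fun j hj => ((((hB' j hj).add_const _).sub_const _).const_mul _))
  have d11 : deriv (fun x' => -(1/2 : ℝ) * 0
        + ∑ j ∈ Finset.Icc 1 n, lam ^ ((j:ℤ) - (n:ℤ)) * (1/2 * dX (b j) x' t)) x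
      = ∑ j ∈ Finset.Icc 1 n, lam ^ ((j:ℤ) - (n:ℤ)) * (1/2 * dX (dX (b j)) x t) := by
    refine HasDerivAt.deriv ?_
    exact HasDerivAt.const_add _
      (HasDerivAt.fun_sum fun j hj => (((hB1' j hj).const_mul _).const_mul _))
  have d10 : deriv (fun x' => -(1/2 : ℝ) * (1/4 + lam * m x' t)
        + ∑ j ∈ Finset.Icc 1 n, lam ^ ((j:ℤ) - (n:ℤ)) *
            (lam * m x' t * (b j x' t + 1/2) - 1/2 * dX (dX (b j)) x' t
              + 1/4 * (b j x' t + 1/2) - 1/2 * m x' t - 1/(8*lam))) x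
      = -(1/2 : ℝ) * (lam * dX m x t)
        + ∑ j ∈ Finset.Icc 1 n, lam ^ ((j:ℤ) - (n:ℤ)) *
            (lam * dX m x t * (b j x t + 1/2) + lam * m x t * dX (b j) x t
              - 1/2 * dX (dX (dX (b j))) x t + 1/4 * dX (b j) x t - 1/2 * dX m x t) := by
    refine HasDerivAt.deriv ?_
    refine HasDerivAt.add ?_ ?_
    · exact ((hμ'.const_mul lam).const_add (1/4)).const_mul _
    · refine HasDerivAt.fun_sum fun j hj => ?_
      exact (((((hμ'.const_mul lam).mul ((hB' j hj).add_const (1/2))).sub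
        ((hB2' j hj).const_mul (1/2))).add
        (((hB' j hj).add_const (1/2)).const_mul (1/4))).sub
        (hμ'.const_mul (1/2))).sub_const _ |>.const_mul _
  have dT10 : deriv (fun t' => 1/4 + lam * m x t') t = lam * dT m x t :=
    HasDerivAt.deriv ((hmt'.const_mul lam).const_add (1/4))
  -- linearizations of the sums
  have hSD : ∑ j ∈ Finset.Icc 1 n, lam ^ ((j:ℤ) - (n:ℤ)) * (-(1/2) * dX (b j) x t)
      = -(1/2) * ∑ j ∈ Finset.Icc 1 n, lam ^ ((j:ℤ) - (n:ℤ)) * dX (b j) x t := by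
    rw [Finset.mul_sum]; exact Finset.sum_congr rfl fun j _ => by ring
  have hSF : ∑ j ∈ Finset.Icc 1 n, lam ^ ((j:ℤ) - (n:ℤ)) * (1/2 * dX (b j) x t)
      = (1/2) * ∑ j ∈ Finset.Icc 1 n, lam ^ ((j:ℤ) - (n:ℤ)) * dX (b j) x t := by
    rw [Finset.mul_sum]; exact Finset.sum_congr rfl fun j _ => by ring
  have hSH : ∑ j ∈ Finset.Icc 1 n, lam ^ ((j:ℤ) - (n:ℤ)) * (-(1/2) * dX (dX (b j)) x t)
      = -(1/2) * ∑ j ∈ Finset.Icc 1 n, lam ^ ((j:ℤ) - (n:ℤ)) * dX (dX (b j)) x t := by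
    rw [Finset.mul_sum]; exact Finset.sum_congr rfl fun j _ => by ring
  have hSG : ∑ j ∈ Finset.Icc 1 n, lam ^ ((j:ℤ) - (n:ℤ)) * (1/2 * dX (dX (b j)) x t)
      = (1/2) * ∑ j ∈ Finset.Icc 1 n, lam ^ ((j:ℤ) - (n:ℤ)) * dX (dX (b j)) x t := by
    rw [Finset.mul_sum]; exact Finset.sum_congr rfl fun j _ => by ring
  have hSE : ∑ j ∈ Finset.Icc 1 n, lam ^ ((j:ℤ) - (n:ℤ)) * (b j x t + 1/2 - 1/(2*lam))
      = (∑ j ∈ Finset.Icc 1 n, lam ^ ((j:ℤ) - (n:ℤ)) * b j x t)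
        + (1/2 - 1/(2*lam)) * ∑ j ∈ Finset.Icc 1 n, lam ^ ((j:ℤ) - (n:ℤ)) := by
    rw [Finset.mul_sum, ← Finset.sum_add_distrib]
    exact Finset.sum_congr rfl fun j _ => by ring
  have hSC : ∑ j ∈ Finset.Icc 1 n, lam ^ ((j:ℤ) - (n:ℤ)) *
        (lam * m x t * (b j x t + 1/2) - 1/2 * dX (dX (b j)) x t
          + 1/4 * (b j x t + 1/2) - 1/2 * m x t - 1/(8*lam))
      = (lam * m x t + 1/4) * (∑ j ∈ Finset.Icc 1 n, lam ^ ((j:ℤ) - (n:ℤ)) * b j x t)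
        + (-(1/2)) * (∑ j ∈ Finset.Icc 1 n, lam ^ ((j:ℤ) - (n:ℤ)) * dX (dX (b j)) x t)
        + (lam * m x t * (1/2) + 1/8 - (1/2) * m x t - 1/(8*lam))
            * ∑ j ∈ Finset.Icc 1 n, lam ^ ((j:ℤ) - (n:ℤ)) := by
    rw [Finset.mul_sum, Finset.mul_sum, Finset.mul_sum, ← Finset.sum_add_distrib,
      ← Finset.sum_add_distrib]
    exact Finset.sum_congr rfl fun j _ => by ring
  -- the telescoping sum for the (1,0) entry
  have hz : ∀ i : ℤ, lam ^ (i + 1 - (n:ℤ)) = lam * lam ^ (i - (n:ℤ)) := by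
    intro i
    rw [← zpow_one_add₀ hlam]
    congr 1
    ring
  have hkey : ∀ j ∈ Finset.Icc 1 n, lam ^ ((j:ℤ) - (n:ℤ)) *
        (lam * dX m x t * (b j x t + 1/2) + lam * m x t * dX (b j) x t
          - 1/2 * dX (dX (dX (b j))) x t + 1/4 * dX (b j) x t - 1/2 * dX m x t)
      = (Faux lam (dX m x t) (m x t) n (fun j => b j x t) (fun j => dX (b j) x t) j
          - Faux lam (dX m x t) (m x t) n (fun j => b j x t) (fun j => dX (b j) x t) (j-1))
        + (-(lam * m x t) - 1/4) * (lam ^ ((j:ℤ) - (n:ℤ)) * dX (b j) x t) := by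
    intro j hj
    obtain ⟨hj1, hjn⟩ := Finset.mem_Icc.mp hj
    obtain ⟨k, rfl⟩ : ∃ k, j = k + 1 := ⟨j - 1, (Nat.succ_pred_eq_of_pos hj1).symm⟩
    simp only [Nat.add_sub_cancel]
    rcases Nat.eq_zero_or_pos k with hk | hk
    · subst hk
      rw [Faux_pos _ _ _ _ _ _ (by norm_num), Faux_zero]
      have h1' := h1 x t
      push_cast
      have hz1 : lam ^ ((2:ℤ) - (n:ℤ)) = lam * lam ^ ((1:ℤ) - (n:ℤ)) := by
        rw [← zpow_one_add₀ hlam]; congr 1; ring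
      rw [hz1]
      linear_combination (-(lam ^ ((1:ℤ) - (n:ℤ)))) * h1'
    · rw [Faux_pos _ _ _ _ _ _ (by omega), Faux_pos _ _ _ _ _ _ (by omega)]
      have hr := hrec (k+1) (by omega) hjn x t
      simp only [Nat.add_sub_cancel] at hr
      rw [hprod k (Finset.mem_Icc.mpr ⟨hk, by omega⟩)] at hr
      push_cast
      rw [hz ((k:ℤ)+1), hz (k:ℤ)]
      linear_combination (-(lam * lam ^ ((k:ℤ) - (n:ℤ)))) * hr
  have tsum : ∑ j ∈ Finset.Icc 1 n, lam ^ ((j:ℤ) - (n:ℤ)) *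
        (lam * dX m x t * (b j x t + 1/2) + lam * m x t * dX (b j) x t
          - 1/2 * dX (dX (dX (b j))) x t + 1/4 * dX (b j) x t - 1/2 * dX m x t)
      = lam * (dX m x t * b n x t + 2 * (m x t * dX (b n) x t) + dX m x t / 2)
        + (-(lam * m x t) - 1/4)
            * ∑ j ∈ Finset.Icc 1 n, lam ^ ((j:ℤ) - (n:ℤ)) * dX (b j) x t := by
    rw [Finset.sum_congr rfl hkey, Finset.sum_add_distrib, tele2, ← Finset.mul_sum,
      Faux_zero, Faux_pos _ _ _ _ _ _ (by omega : n ≠ 0), sub_zero]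
    have : ((n:ℤ) + 1 - (n:ℤ)) = 1 := by ring
    rw [this, zpow_one]
  -- expand the matrix equation entrywise
  ext i k
  fin_cases i <;> fin_cases k <;>
    simp only [mdX, mdT, CHU, CHVt, Matrix.sub_apply, Matrix.add_apply,
      Matrix.smul_apply, Matrix.sum_apply, Matrix.of_apply, Matrix.mul_apply,
      Fin.sum_univ_two, Matrix.cons_val', Matrix.cons_val_zero, Matrix.cons_val_one,
      Matrix.head_cons, Matrix.head_fin_const, Matrix.empty_val', Matrix.cons_val_fin_one,
      smul_eq_mul, Matrix.zero_apply, Fin.zero_eta, Fin.mk_one, Fin.isValue, deriv_const']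
  · -- (0,0)
    rw [d00, hSH, hSC, hSE]
    field_simp
    ring
  · -- (0,1)
    rw [d01, hSF, hSD]
    ring
  · -- (1,0)
    rw [dT10, d10, tsum, hSD, hSF, hev x t, hprod n (Finset.mem_Icc.mpr ⟨hn, le_refl n⟩)]
    ring
  · -- (1,1)
    rw [d11, hSG, hSC, hSE]
    field_simp
    ring
end

section
/- Let m, b_1 : ℝ² → ℝ be smooth functions of (x, t) satisfying the Camassa–Holm equation in the form m_t = (m b_1)_x + m b_{1,x} together with (1/2)(b_{1,xxx} − b_{1,x}) = −(1/2) m_x. Then for every real λ ≠ 0 the zero-curvature equation U_t − V_x + U V − V U = 0 holds pointwise on ℝ², where V = [[−(1/2) b_{1,x}, b_1 − 1/(2λ)], [λ m b_1 − (1/2) b_{1,xx} + (1/4) b_1 − (1/2) m − 1/(8λ), (1/2) b_{1,x}]]. -/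
open Matrix Finset

section Aux

variable {f : ℝ → ℝ → ℝ}

lemma diffX (hf : Smooth2 f) (x t : ℝ) :
    DifferentiableAt ℝ (fun x' => f x' t) x := by
  have h1 : DifferentiableAt ℝ (fun x' : ℝ => ((x' : ℝ), t)) x :=
    (differentiableAt_id.prodMk (differentiableAt_const t))
  exact ((hf.differentiable (by simp) (x, t)).comp x h1)

lemma diffT (hf : Smooth2 f) (x t : ℝ) :
    DifferentiableAt ℝ (fun t' => f x t') t := by
  have h1 : DifferentiableAt ℝ (fun t' : ℝ => ((x : ℝ), t')) t :=
    (differentiableAt_const x).prodMk differentiableAt_id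
  exact ((hf.differentiable (by simp) (x, t)).comp t h1)

lemma hasDX (hf : Smooth2 f) (x t : ℝ) :
    HasDerivAt (fun x' => f x' t) (dX f x t) x :=
  (diffX hf x t).hasDerivAt

lemma hasDT (hf : Smooth2 f) (x t : ℝ) :
    HasDerivAt (fun t' => f x t') (dT f x t) t :=
  (diffT hf x t).hasDerivAt

lemma smoothDX (hf : Smooth2 f) : Smooth2 (dX f) := by
  have key : ∀ p : ℝ × ℝ, dX f p.1 p.2
      = fderiv ℝ (fun p : ℝ × ℝ => f p.1 p.2) p ((1 : ℝ), (0 : ℝ)) := by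
    rintro ⟨x, t⟩
    have h1 : HasDerivAt (fun x' : ℝ => ((x' : ℝ), t)) ((1 : ℝ), (0 : ℝ)) x :=
      (hasDerivAt_id x).prodMk (hasDerivAt_const x t)
    have h2 := ((hf.differentiable (by simp) (x, t)).hasFDerivAt).comp_hasDerivAt x h1
    have h3 : HasDerivAt (fun x' => f x' t)
        (fderiv ℝ (fun p : ℝ × ℝ => f p.1 p.2) (x, t) ((1 : ℝ), (0 : ℝ))) x := h2
    simp only [dX]
    exact h3.deriv
  have h : ContDiff ℝ (⊤ : ℕ∞)
      (fun p : ℝ × ℝ => fderiv ℝ (fun p : ℝ × ℝ => f p.1 p.2) p ((1 : ℝ), (0 : ℝ))) :=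
    (hf.fderiv_right (by simp)).clm_apply contDiff_const
  have heq : (fun p : ℝ × ℝ => dX f p.1 p.2)
      = fun p : ℝ × ℝ => fderiv ℝ (fun p : ℝ × ℝ => f p.1 p.2) p ((1 : ℝ), (0 : ℝ)) :=
    funext key
  rw [Smooth2, heq]
  exact h

end Aux

/-- the Camassa–Holm equation admits the zero-curvature (Lax)
representation `U_t − V_x + U V − V U = 0`. -/
theorem CH_zero_curvature
    (m b1 : ℝ → ℝ → ℝ) (hm : Smooth2 m) (hb1 : Smooth2 b1)
    (hev : ∀ x t, dT m x t
        = dX (fun x t => m x t * b1 x t) x t + m x t * dX b1 x t)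
    (hb : ∀ x t, (1/2) * (dX (dX (dX b1)) x t - dX b1 x t) = -(1/2) * dX m x t)
    (lam : ℝ) (hlam : lam ≠ 0) :
    ∀ x t,
      mdT (CHU lam m) x t
        - mdX (fun x t =>
            !![-(1/2) * dX b1 x t, b1 x t - 1/(2*lam);
               lam * m x t * b1 x t - (1/2) * dX (dX b1) x t + (1/4) * b1 x t
                 - (1/2) * m x t - 1/(8*lam),
               (1/2) * dX b1 x t]) x t
        + CHU lam m x t *
            !![-(1/2) * dX b1 x t, b1 x t - 1/(2*lam);
               lam * m x t * b1 x t - (1/2) * dX (dX b1) x t + (1/4) * b1 x t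
                 - (1/2) * m x t - 1/(8*lam),
               (1/2) * dX b1 x t]
        - !![-(1/2) * dX b1 x t, b1 x t - 1/(2*lam);
             lam * m x t * b1 x t - (1/2) * dX (dX b1) x t + (1/4) * b1 x t
               - (1/2) * m x t - 1/(8*lam),
             (1/2) * dX b1 x t] * CHU lam m x t
      = 0 := by
  intro x t
  have hb1x : Smooth2 (dX b1) := smoothDX hb1
  have hb1xx : Smooth2 (dX (dX b1)) := smoothDX hb1x
  have Dm : HasDerivAt (fun x' => m x' t) (dX m x t) x := hasDX hm x t
  have Db : HasDerivAt (fun x' => b1 x' t) (dX b1 x t) x := hasDX hb1 x t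
  have Dbx : HasDerivAt (fun x' => dX b1 x' t) (dX (dX b1) x t) x := hasDX hb1x x t
  have Dbxx : HasDerivAt (fun x' => dX (dX b1) x' t) (dX (dX (dX b1)) x t) x :=
    hasDX hb1xx x t
  have Dmt : HasDerivAt (fun t' => m x t') (dT m x t) t := hasDT hm x t
  have hev' : dT m x t = (dX m x t * b1 x t + m x t * dX b1 x t) + m x t * dX b1 x t := by
    have hprod : dX (fun x t => m x t * b1 x t) x t
        = dX m x t * b1 x t + m x t * dX b1 x t := (Dm.mul Db).deriv
    have h := hev x t
    rw [hprod] at h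
    exact h
  have hb' := hb x t
  have d00 : deriv (fun x' => -(1/2) * dX b1 x' t) x = -(1/2) * dX (dX b1) x t :=
    (Dbx.const_mul _).deriv
  have d01 : deriv (fun x' => b1 x' t - 1/(2*lam)) x = dX b1 x t :=
    (Db.sub_const _).deriv
  have d10 : deriv (fun x' => lam * m x' t * b1 x' t - (1/2) * dX (dX b1) x' t
        + (1/4) * b1 x' t - (1/2) * m x' t - 1/(8*lam)) x
      = ((lam * dX m x t * b1 x t + lam * m x t * dX b1 x t
          - (1/2) * dX (dX (dX b1)) x t) + (1/4) * dX b1 x t - (1/2) * dX m x t) := by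
    have h := (((((Dm.const_mul lam).mul Db).sub (Dbxx.const_mul (1/2))).add
      (Db.const_mul (1/4))).sub (Dm.const_mul (1/2))).sub_const (1/(8*lam))
    simpa using h.deriv
  have d11 : deriv (fun x' => (1/2) * dX b1 x' t) x = (1/2) * dX (dX b1) x t :=
    (Dbx.const_mul _).deriv
  have dt10 : deriv (fun t' => 1/4 + lam * m x t') t = lam * dT m x t :=
    ((Dmt.const_mul lam).const_add _).deriv
  ext i j
  fin_cases i <;> fin_cases j <;>
    simp only [mdT, mdX, CHU, Fin.mk_zero, Fin.mk_one, Fin.isValue, Matrix.sub_apply,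
      Matrix.add_apply, Matrix.mul_apply, Fin.sum_univ_two, Matrix.of_apply,
      Matrix.cons_val', Matrix.cons_val_zero, Matrix.cons_val_one, Matrix.head_cons,
      Matrix.head_fin_const, Matrix.empty_val', Matrix.cons_val_fin_one,
      Matrix.zero_apply, deriv_const, d00, d01, d10, d11, dt10]
  · field_simp
    ring
  · ring
  · have hl : lam * dT m x t
        = lam * (dX m x t * b1 x t + m x t * dX b1 x t + m x t * dX b1 x t) := by
      rw [hev']
    linear_combination hl + hb'
  · field_simp
    ring
end

section
/- Let m, b_1, b_2 : ℝ² → ℝ be smooth functions of (x, t) satisfying the 2-nd CH equation: m_t = (m b_2)_x + m b_{2,x}; (1/2)(b_{2,xxx} − b_{2,x}) = (m b_1)_x + m b_{1,x}; and (1/2)(b_{1,xxx} − b_{1,x}) = −(1/2) m_x. Then for every real λ ≠ 0 the zero-curvature equation U_t − V_x + U V − V U = 0 holds pointwise on ℝ², where V = [[−(1/2) b_{2,x}, b_2 − 1/(2λ)], [λ m b_2 − (1/2) b_{2,xx} + (1/4) b_2 − (1/2) m − 1/(8λ), (1/2) b_{2,x}]] + λ^{−1} Ṽ[b_1]. -/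
open Matrix Finset

lemma Smooth2.hasDerivAt_x {f : ℝ → ℝ → ℝ} (hf : Smooth2 f) (x t : ℝ) :
    HasDerivAt (fun x' => f x' t) (dX f x t) x := by
  have h : DifferentiableAt ℝ (fun x' => f x' t) x :=
    by
      have := (hf.differentiable (by simp)).comp ((differentiable_id).prodMk (differentiable_const t))
      exact this.differentiableAt
  simpa [dX] using h.hasDerivAt

lemma Smooth2.hasDerivAt_t {f : ℝ → ℝ → ℝ} (hf : Smooth2 f) (x t : ℝ) :
    HasDerivAt (fun t' => f x t') (dT f x t) t := by
  have h : DifferentiableAt ℝ (fun t' => f x t') t :=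
    by
      have := (hf.differentiable (by simp)).comp ((differentiable_const x).prodMk differentiable_id)
      exact this.differentiableAt
  simpa [dT] using h.hasDerivAt

lemma Smooth2.smooth_dX {f : ℝ → ℝ → ℝ} (hf : Smooth2 f) : Smooth2 (dX f) := by
  have h1 : ContDiff ℝ (⊤ : ℕ∞) (fun p : ℝ × ℝ => fderiv ℝ (fun q : ℝ × ℝ => f q.1 q.2) p (1, 0)) :=
    (hf.fderiv_right (le_refl _)).clm_apply contDiff_const
  have h2 : ∀ x t : ℝ, dX f x t = fderiv ℝ (fun q : ℝ × ℝ => f q.1 q.2) (x, t) (1, 0) := by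
    intro x t
    have hF := (hf.differentiable (by simp)).differentiableAt (x := (x, t))
    have hc : HasDerivAt (fun x' => f x' t)
        (fderiv ℝ (fun q : ℝ × ℝ => f q.1 q.2) (x, t) ((1 : ℝ), (0 : ℝ))) x := by
      have := hF.hasFDerivAt.comp_hasDerivAt x ((hasDerivAt_id x).prodMk (hasDerivAt_const x t))
      exact this
    exact hc.deriv ▸ rfl
  have : (fun p : ℝ × ℝ => dX f p.1 p.2)
      = fun p : ℝ × ℝ => fderiv ℝ (fun q : ℝ × ℝ => f q.1 q.2) p (1, 0) :=
    funext fun p => h2 p.1 p.2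
  unfold Smooth2
  rw [this]; exact h1

set_option maxHeartbeats 2000000 in
/-- the 2-nd CH equation admits the zero-curvature (Lax)
representation `U_t − V_x + U V − V U = 0`. -/
theorem second_CH_zero_curvature
    (m b1 b2 : ℝ → ℝ → ℝ) (hm : Smooth2 m) (hb1 : Smooth2 b1) (hb2 : Smooth2 b2)
    (hev : ∀ x t, dT m x t
        = dX (fun x t => m x t * b2 x t) x t + m x t * dX b2 x t)
    (h2 : ∀ x t, (1/2) * (dX (dX (dX b2)) x t - dX b2 x t)
        = dX (fun x t => m x t * b1 x t) x t + m x t * dX b1 x t)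
    (h1 : ∀ x t, (1/2) * (dX (dX (dX b1)) x t - dX b1 x t) = -(1/2) * dX m x t)
    (lam : ℝ) (hlam : lam ≠ 0) :
    ∀ x t,
      mdT (CHU lam m) x t
        - mdX (fun x t =>
            !![-(1/2) * dX b2 x t, b2 x t - 1/(2*lam);
               lam * m x t * b2 x t - (1/2) * dX (dX b2) x t + (1/4) * b2 x t
                 - (1/2) * m x t - 1/(8*lam),
               (1/2) * dX b2 x t]
            + lam⁻¹ • CHVt lam m b1 x t) x t
        + CHU lam m x t *
            (!![-(1/2) * dX b2 x t, b2 x t - 1/(2*lam);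
                lam * m x t * b2 x t - (1/2) * dX (dX b2) x t + (1/4) * b2 x t
                  - (1/2) * m x t - 1/(8*lam),
                (1/2) * dX b2 x t]
              + lam⁻¹ • CHVt lam m b1 x t)
        - (!![-(1/2) * dX b2 x t, b2 x t - 1/(2*lam);
              lam * m x t * b2 x t - (1/2) * dX (dX b2) x t + (1/4) * b2 x t
                - (1/2) * m x t - 1/(8*lam),
              (1/2) * dX b2 x t]
              + lam⁻¹ • CHVt lam m b1 x t) * CHU lam m x t
      = 0 := by
  intro x t
  have hprod1 : dX (fun x t => m x t * b1 x t) x t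
      = dX m x t * b1 x t + m x t * dX b1 x t :=
    ((hm.hasDerivAt_x x t).mul (hb1.hasDerivAt_x x t)).deriv
  have hprod2 : dX (fun x t => m x t * b2 x t) x t
      = dX m x t * b2 x t + m x t * dX b2 x t :=
    ((hm.hasDerivAt_x x t).mul (hb2.hasDerivAt_x x t)).deriv
  have e0 : deriv (fun x' => -(2⁻¹ * dX b2 x' t) + -(lam⁻¹ * (2⁻¹ * dX b1 x' t))) x
      = -(2⁻¹ * dX (dX b2) x t) + -(lam⁻¹ * (2⁻¹ * dX (dX b1) x t)) :=
    ((((hb2.smooth_dX.hasDerivAt_x x t).const_mul 2⁻¹).neg).add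
      ((((hb1.smooth_dX.hasDerivAt_x x t).const_mul 2⁻¹).const_mul lam⁻¹).neg)).deriv
  have e1 : deriv (fun x' => b2 x' t - lam⁻¹ * 2⁻¹ + lam⁻¹ * (b1 x' t + 2⁻¹ - lam⁻¹ * 2⁻¹)) x
      = dX b2 x t + lam⁻¹ * dX b1 x t :=
    (((hb2.hasDerivAt_x x t).sub_const (lam⁻¹ * 2⁻¹)).add
      ((((hb1.hasDerivAt_x x t).add_const 2⁻¹).sub_const (lam⁻¹ * 2⁻¹)).const_mul lam⁻¹)).deriv
  have e3 : deriv (fun x' => 2⁻¹ * dX b2 x' t + lam⁻¹ * (2⁻¹ * dX b1 x' t)) x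
      = 2⁻¹ * dX (dX b2) x t + lam⁻¹ * (2⁻¹ * dX (dX b1) x t) :=
    (((hb2.smooth_dX.hasDerivAt_x x t).const_mul 2⁻¹).add
      (((hb1.smooth_dX.hasDerivAt_x x t).const_mul 2⁻¹).const_mul lam⁻¹)).deriv
  have e2 : deriv (fun x' =>
        lam * m x' t * b2 x' t - 2⁻¹ * dX (dX b2) x' t + 4⁻¹ * b2 x' t - 2⁻¹ * m x' t - lam⁻¹ * 8⁻¹ +
          lam⁻¹ * (lam * m x' t * (b1 x' t + 2⁻¹) - 2⁻¹ * dX (dX b1) x' t + 4⁻¹ * (b1 x' t + 2⁻¹)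
            - 2⁻¹ * m x' t - lam⁻¹ * 8⁻¹)) x
      = lam * dX m x t * b2 x t + lam * m x t * dX b2 x t - 2⁻¹ * dX (dX (dX b2)) x t
          + 4⁻¹ * dX b2 x t - 2⁻¹ * dX m x t
          + lam⁻¹ * (lam * dX m x t * (b1 x t + 2⁻¹) + lam * m x t * dX b1 x t
              - 2⁻¹ * dX (dX (dX b1)) x t + 4⁻¹ * dX b1 x t - 2⁻¹ * dX m x t) := by
    have inner : HasDerivAt (fun x' =>
        lam * m x' t * (b1 x' t + 2⁻¹) - 2⁻¹ * dX (dX b1) x' t + 4⁻¹ * (b1 x' t + 2⁻¹)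
          - 2⁻¹ * m x' t - lam⁻¹ * 8⁻¹)
        (lam * dX m x t * (b1 x t + 2⁻¹) + lam * m x t * dX b1 x t
          - 2⁻¹ * dX (dX (dX b1)) x t + 4⁻¹ * dX b1 x t - 2⁻¹ * dX m x t) x := by
      have h := (((((hm.hasDerivAt_x x t).const_mul lam).mul
            ((hb1.hasDerivAt_x x t).add_const 2⁻¹)).sub
          ((hb1.smooth_dX.smooth_dX.hasDerivAt_x x t).const_mul 2⁻¹)).add
            (((hb1.hasDerivAt_x x t).add_const 2⁻¹).const_mul 4⁻¹)).sub
          ((hm.hasDerivAt_x x t).const_mul 2⁻¹)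
      have h' := h.sub_const (lam⁻¹ * 8⁻¹)
      exact h'
    have outer : HasDerivAt (fun x' =>
        lam * m x' t * b2 x' t - 2⁻¹ * dX (dX b2) x' t + 4⁻¹ * b2 x' t - 2⁻¹ * m x' t - lam⁻¹ * 8⁻¹)
        (lam * dX m x t * b2 x t + lam * m x t * dX b2 x t - 2⁻¹ * dX (dX (dX b2)) x t
          + 4⁻¹ * dX b2 x t - 2⁻¹ * dX m x t) x := by
      have h := ((((((hm.hasDerivAt_x x t).const_mul lam).mul (hb2.hasDerivAt_x x t)).sub
          ((hb2.smooth_dX.smooth_dX.hasDerivAt_x x t).const_mul 2⁻¹)).add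
            ((hb2.hasDerivAt_x x t).const_mul 4⁻¹)).sub
          ((hm.hasDerivAt_x x t).const_mul 2⁻¹)).sub_const (lam⁻¹ * 8⁻¹)
      exact h
    exact (outer.add (inner.const_mul lam⁻¹)).deriv
  have hev' := hev x t; rw [hprod2] at hev'
  have h2' := h2 x t; rw [hprod1] at h2'
  have h1' := h1 x t
  ext i j
  fin_cases i <;> fin_cases j <;>
    simp [mdX, mdT, CHU, CHVt, Matrix.mul_apply, Fin.sum_univ_two, Matrix.add_apply,
      Matrix.smul_apply, smul_eq_mul, Matrix.vecHead, Matrix.vecTail]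
  · rw [e0]; field_simp; ring
  · rw [e1]; ring
  · rw [show deriv (m x) t = dT m x t from rfl, e2, hev']
    linear_combination (norm := (field_simp; ring1)) h2' + lam⁻¹ * h1'
  · rw [e3]; field_simp; ring
end
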